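/- Let 1 ≤ k < n, let h ∈ ℝ^n, let 0 ≤ c ≤ n−k be an integer, and set ν = (h̃ᵀz − Σ_{i=1}^c h̃_i)/(n−c). If ν ≥ 0 and ν ≥ h̃_i for all 1 ≤ i ≤ c, then sup_{w ∈ S_s} hᵀw ≤ sqrt( Σ_{i=c+1}^n h̃_i² − (h̃ᵀz − Σ_{i=1}^c h̃_i)²/(n−c) ). -/
import Mathlib


/-- `sortedAbs h` is the vector of magnitudes `|h i|` sorted in nondecreasing order. -/
noncomputable def sortedAbs {n : ℕ} (h : Fin n → ℝ) : Fin n → ℝ :=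
  (fun i => |h i|) ∘ Tuple.sort (fun i => |h i|)

/-- The set `S_s`: vectors on the unit Euclidean sphere of `ℝ^n` such that the sum of the
`k` largest magnitudes is at least the sum of the remaining `n - k` magnitudes. -/
def Ss (n k : ℕ) : Set (Fin n → ℝ) :=
  {w | (∑ i, (w i) ^ 2 = 1) ∧
    ∑ i ∈ Finset.univ.filter (fun i : Fin n => (i : ℕ) < n - k), sortedAbs w i ≤
      ∑ i ∈ Finset.univ.filter (fun i : Fin n => n - k ≤ (i : ℕ)), sortedAbs w i}

open Finset

lemma sortedAbs_nonneg' {n : ℕ} (h : Fin n → ℝ) (i : Fin n) : 0 ≤ sortedAbs h i :=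
  abs_nonneg _

lemma sortedAbs_mono' {n : ℕ} (h : Fin n → ℝ) : Monotone (sortedAbs h) :=
  Tuple.monotone_sort _

lemma sum_comp_sortedAbs' {n : ℕ} (h : Fin n → ℝ) (g : ℝ → ℝ) :
    ∑ i, g (sortedAbs h i) = ∑ i, g |h i| :=
  Equiv.sum_comp (Tuple.sort (fun i => |h i|)) (fun i => g |h i|)

lemma card_filter_lt_fin' (n c : ℕ) (h : c ≤ n) :
    (Finset.univ.filter (fun i : Fin n => (i : ℕ) < c)).card = c := by
  rw [← Fintype.card_subtype]
  rw [Fintype.card_congr (⟨fun i => (⟨i.1, i.2⟩ : Fin c),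
    fun j => ⟨⟨j.1, lt_of_lt_of_le j.2 h⟩, j.2⟩, fun i => rfl, fun j => rfl⟩ :
    {i : Fin n // (i:ℕ) < c} ≃ Fin c)]
  exact Fintype.card_fin c

lemma filter_not_lt_fin' (n c : ℕ) :
    (Finset.univ.filter (fun i : Fin n => ¬ (i : ℕ) < c))
      = Finset.univ.filter (fun i : Fin n => c ≤ (i : ℕ)) := by
  apply Finset.filter_congr; intro i _; simp [not_lt]

lemma card_filter_le_fin' (n c : ℕ) (h : c ≤ n) :
    (Finset.univ.filter (fun i : Fin n => c ≤ (i : ℕ))).card = n - c := by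
  have h1 := Finset.card_filter_add_card_filter_not (s := (univ : Finset (Fin n)))
    (p := fun i : Fin n => (i : ℕ) < c)
  rw [card_filter_lt_fin' n c h, Finset.card_univ, Fintype.card_fin,
    filter_not_lt_fin' n c] at h1
  omega

/-- with `ν = (h̃ᵀz - ∑_{i=1}^c h̃ i)/(n - c)`, if `ν ≥ 0` and `ν ≥ h̃ i`
for `1 ≤ i ≤ c`, then
`sup_{w ∈ S_s} hᵀw ≤ sqrt(∑_{i=c+1}^n h̃ i ² - (h̃ᵀz - ∑_{i=1}^c h̃ i)²/(n-c))`. -/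
theorem stmt9 (n k c : ℕ) (hk1 : 1 ≤ k) (hkn : k < n) (hc : c ≤ n - k)
    (h : Fin n → ℝ)
    (z : Fin n → ℝ) (hz : z = fun i : Fin n => if (i : ℕ) < n - k then (1 : ℝ) else -1)
    (ν : ℝ)
    (hν : ν = ((∑ i, sortedAbs h i * z i) -
      ∑ i ∈ Finset.univ.filter (fun i : Fin n => (i : ℕ) < c), sortedAbs h i) / (n - c))
    (hν0 : 0 ≤ ν)
    (hνge : ∀ i : Fin n, (i : ℕ) < c → sortedAbs h i ≤ ν) :
    sSup {v : ℝ | ∃ w ∈ Ss n k, v = ∑ i, h i * w i} ≤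
      Real.sqrt ((∑ i ∈ Finset.univ.filter (fun i : Fin n => c ≤ (i : ℕ)), (sortedAbs h i) ^ 2) -
        ((∑ i, sortedAbs h i * z i) -
          ∑ i ∈ Finset.univ.filter (fun i : Fin n => (i : ℕ) < c), sortedAbs h i) ^ 2 / (n - c)) := by
  set H : Fin n → ℝ := sortedAbs h with hH
  set S : ℝ := (∑ i, H i * z i) - ∑ i ∈ Finset.univ.filter (fun i : Fin n => (i : ℕ) < c), H i
    with hS
  have hcn : c < n := lt_of_le_of_lt hc (by omega)
  have hd0 : (0 : ℝ) < (n : ℝ) - c := by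
    have : (c : ℝ) < n := by exact_mod_cast hcn
    linarith
  -- the key quantity
  set A : ℝ := (∑ i ∈ Finset.univ.filter (fun i : Fin n => c ≤ (i : ℕ)), (H i) ^ 2)
    - S ^ 2 / ((n : ℝ) - c) with hA
  apply Real.sSup_le _ (Real.sqrt_nonneg _)
  rintro v ⟨w, hw, rfl⟩
  set W : Fin n → ℝ := sortedAbs w with hW
  -- Step 1: h·w ≤ Σ H W
  set σh := Tuple.sort (fun i => |h i|) with hσh
  set σw := Tuple.sort (fun i => |w i|) with hσw
  have step1 : ∑ i, h i * w i ≤ ∑ i, |h i| * |w i| := by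
    apply Finset.sum_le_sum
    intro i _
    rw [← abs_mul]
    exact le_abs_self _
  have step2 : ∑ i, |h i| * |w i| = ∑ i, H i * |w (σh i)| :=
    (Equiv.sum_comp σh (fun i => |h i| * |w i|)).symm
  have hmv : Monovary H W := by
    intro i j hij
    exact sortedAbs_mono' h (le_of_not_gt fun hlt =>
      absurd hij (not_lt.2 (sortedAbs_mono' w hlt.le)))
  have step3 : ∑ i, H i * |w (σh i)| ≤ ∑ i, H i * W i := by
    have heq : ∀ i, |w (σh i)| = W ((σh.trans σw.symm) i) := by
      intro i
      show |w (σh i)| = |w (σw (σw.symm (σh i)))|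
      rw [Equiv.apply_symm_apply]
    calc ∑ i, H i * |w (σh i)| = ∑ i, H i * W ((σh.trans σw.symm) i) := by
          exact Finset.sum_congr rfl fun i _ => by rw [heq]
      _ ≤ ∑ i, H i * W i := hmv.sum_mul_comp_perm_le_sum_mul
  -- z·W ≤ 0
  have hzW : ∑ i, z i * W i ≤ 0 := by
    have hsp := hw.2
    rw [hz]
    simp only [ite_mul, one_mul, neg_one_mul]
    rw [Finset.sum_ite, Finset.sum_neg_distrib, filter_not_lt_fin' n (n - k)]
    linarith
  -- Step 5: Σ H W ≤ Σ (H - ν z) W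
  have step5 : ∑ i, H i * W i ≤ ∑ i, (H i - ν * z i) * W i := by
    have : ∑ i, (H i - ν * z i) * W i = ∑ i, H i * W i - ν * ∑ i, z i * W i := by
      rw [Finset.mul_sum, ← Finset.sum_sub_distrib]
      exact Finset.sum_congr rfl fun i _ => by ring
    rw [this]
    nlinarith [mul_nonneg hν0 (neg_nonneg.2 hzW)]
  -- Step 6: drop the i < c terms
  have step6 : ∑ i, (H i - ν * z i) * W i ≤
      ∑ i ∈ Finset.univ.filter (fun i : Fin n => c ≤ (i : ℕ)), (H i - ν * z i) * W i := by
    rw [← Finset.sum_filter_add_sum_filter_not univ (fun i : Fin n => (i : ℕ) < c),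
      filter_not_lt_fin' n c]
    have hle : ∑ i ∈ Finset.univ.filter (fun i : Fin n => (i : ℕ) < c),
        (H i - ν * z i) * W i ≤ 0 := by
      apply Finset.sum_nonpos
      intro i hi
      rw [Finset.mem_filter] at hi
      have hzi : z i = 1 := by
        rw [hz]; simp only; rw [if_pos (lt_of_lt_of_le hi.2 hc)]
      rw [hzi, mul_one]
      exact mul_nonpos_of_nonpos_of_nonneg (by linarith [hνge i hi.2]) (sortedAbs_nonneg' w i)
    linarith
  -- Step 7: Cauchy-Schwarz
  set T := Finset.univ.filter (fun i : Fin n => c ≤ (i : ℕ)) with hT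
  have step7 : ∑ i ∈ T, (H i - ν * z i) * W i ≤
      Real.sqrt (∑ i ∈ T, (H i - ν * z i) ^ 2) * Real.sqrt (∑ i ∈ T, (W i) ^ 2) :=
    Real.sum_mul_le_sqrt_mul_sqrt T _ _
  -- Σ W² = 1 and Σ_T W² ≤ 1
  have hWsq : ∑ i, (W i) ^ 2 = 1 := by
    have := sum_comp_sortedAbs' w (fun x => x ^ 2)
    rw [← hW] at this
    rw [this]
    rw [← hw.1]
    exact Finset.sum_congr rfl fun i _ => sq_abs _
  have hWsqT : ∑ i ∈ T, (W i) ^ 2 ≤ 1 := by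
    rw [← hWsq]
    exact Finset.sum_le_sum_of_subset_of_nonneg (Finset.subset_univ T)
      (fun i _ _ => sq_nonneg _)
  have step8 : Real.sqrt (∑ i ∈ T, (H i - ν * z i) ^ 2) * Real.sqrt (∑ i ∈ T, (W i) ^ 2)
      ≤ Real.sqrt (∑ i ∈ T, (H i - ν * z i) ^ 2) := by
    apply mul_le_of_le_one_right (Real.sqrt_nonneg _)
    rw [show (1:ℝ) = Real.sqrt 1 by rw [Real.sqrt_one]]
    exact Real.sqrt_le_sqrt hWsqT
  -- Step 9: compute the quadratic form
  have hzsq : ∀ i : Fin n, (z i) ^ 2 = 1 := by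
    intro i; rw [hz]; simp only
    split <;> norm_num
  have hHzT : ∑ i ∈ T, H i * z i = S := by
    have hsplit : ∑ i, H i * z i =
        (∑ i ∈ Finset.univ.filter (fun i : Fin n => (i : ℕ) < c), H i * z i)
          + ∑ i ∈ T, H i * z i := by
      rw [hT, ← filter_not_lt_fin' n c]
      exact (Finset.sum_filter_add_sum_filter_not univ (fun i : Fin n => (i : ℕ) < c) _).symm
    have hlow : ∑ i ∈ Finset.univ.filter (fun i : Fin n => (i : ℕ) < c), H i * z i
        = ∑ i ∈ Finset.univ.filter (fun i : Fin n => (i : ℕ) < c), H i := by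
      apply Finset.sum_congr rfl
      intro i hi
      rw [Finset.mem_filter] at hi
      have hzi : z i = 1 := by
        rw [hz]; simp only; rw [if_pos (lt_of_lt_of_le hi.2 hc)]
      rw [hzi, mul_one]
    rw [hS, hsplit, hlow]
    ring
  have hcardT : (T.card : ℝ) = (n : ℝ) - c := by
    rw [hT, card_filter_le_fin' n c hcn.le]
    rw [Nat.cast_sub hcn.le]
  have step9 : ∑ i ∈ T, (H i - ν * z i) ^ 2 = A := by
    have hexp : ∀ i : Fin n, (H i - ν * z i) ^ 2
        = (H i) ^ 2 - 2 * ν * (H i * z i) + ν ^ 2 * (z i) ^ 2 := fun i => by ring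
    rw [Finset.sum_congr rfl fun i _ => hexp i]
    rw [Finset.sum_add_distrib, Finset.sum_sub_distrib, ← Finset.mul_sum, ← Finset.mul_sum,
      hHzT]
    have : ∑ i ∈ T, (z i) ^ 2 = (T.card : ℝ) := by
      rw [Finset.sum_congr rfl fun i _ => hzsq i]
      simp
    rw [this, hcardT, hA, hν]
    field_simp
    ring
  -- assemble
  have hfinal : ∑ i, h i * w i ≤ Real.sqrt A := by
    calc ∑ i, h i * w i ≤ ∑ i, |h i| * |w i| := step1
      _ = ∑ i, H i * |w (σh i)| := step2
      _ ≤ ∑ i, H i * W i := step3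
      _ ≤ ∑ i, (H i - ν * z i) * W i := step5
      _ ≤ ∑ i ∈ T, (H i - ν * z i) * W i := step6
      _ ≤ Real.sqrt (∑ i ∈ T, (H i - ν * z i) ^ 2) * Real.sqrt (∑ i ∈ T, (W i) ^ 2) := step7
      _ ≤ Real.sqrt (∑ i ∈ T, (H i - ν * z i) ^ 2) := step8
      _ = Real.sqrt A := by rw [step9]
  exact hfinal
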